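/- arXiv:1402.5287 — 5 statements merged into one kernel-verified Lean document; each statement's English description precedes it below -/
import Mathlib

section
/- With the decomposition setup below, for every s with 1 ≤ s ≤ l, the s-th component of ŷ satisfies ŷ_s = Σ_{j=1}^{n} Σ_{k=1}^{l} a_{j, ((s+k−2) mod l)+1} · x_{jk}. In particular, ŷ_1 = Σ_{j=1}^{n} Σ_{k=1}^{l} a_{jk} x_{jk}. -/
lemma decomp_key (R : Type*) [CommRing R] (n l : ℕ) (hl : 1 ≤ l)
    (a : ℕ → ℕ → R) (g : ℕ → R)
    (hg1 : ∀ m, 1 ≤ m → m ≤ 2 * l * (2 * n - 1) →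
      g m = a ((m + 2 * l - 1) / (2 * l)) ((m - 1) % l + 1))
    (s j k : ℕ) (hs1 : 1 ≤ s) (hs2 : s ≤ l) (hj1 : 1 ≤ j) (hj2 : j ≤ n)
    (hk1 : 1 ≤ k) (hk2 : k ≤ l) :
    g (s + 2 * l * (j - 1) + k - 1) = a j ((s + k - 2) % l + 1) := by
  obtain ⟨s', rfl⟩ := Nat.exists_eq_add_of_le hs1
  obtain ⟨j', rfl⟩ := Nat.exists_eq_add_of_le hj1
  obtain ⟨k', rfl⟩ := Nat.exists_eq_add_of_le hk1
  have hj'' : 1 + j' - 1 = j' := by omega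
  rw [hj'']
  have hm : 1 + s' + 2 * l * j' + (1 + k') - 1 = s' + k' + 2 * l * j' + 1 := by
    omega
  rw [hm]
  have hA : 2 * l * j' ≤ 2 * l * (2 * n - 2) := by
    apply Nat.mul_le_mul_left
    omega
  have hrw : 2 * l * (2 * n - 1) = 2 * l * (2 * n - 2) + 2 * l := by
    rw [← Nat.mul_succ]
    congr 1
    omega
  have hub : s' + k' + 2 * l * j' + 1 ≤ 2 * l * (2 * n - 1) := by
    omega
  rw [hg1 _ (by omega) hub]
  have hmul : 2 * l * (1 + j') = 2 * l + 2 * l * j' := by ring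
  have hdiv : (s' + k' + 2 * l * j' + 1 + 2 * l - 1) / (2 * l) = 1 + j' := by
    have h1 : s' + k' + 2 * l * j' + 1 + 2 * l - 1 = s' + k' + 2 * l * (1 + j') := by
      omega
    rw [h1, Nat.add_mul_div_left _ _ (by omega : 0 < 2 * l),
      Nat.div_eq_of_lt (by omega)]
    omega
  have hmod : (s' + k' + 2 * l * j' + 1 - 1) % l = (1 + s' + (1 + k') - 2) % l := by
    have h1 : s' + k' + 2 * l * j' + 1 - 1 = (s' + k') + l * (2 * j') := by ring_nf; omega
    have h2 : 1 + s' + (1 + k') - 2 = s' + k' := by omega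
    rw [h1, h2, Nat.add_mul_mod_self_left]
  rw [hdiv, hmod]

/-- Decomposition setup: entries a_i = Σ_k a_{ik}, x_j = Σ_k x_{jk}; g is the
2l(2n−1)-vector repeating each block (a_{i1},…,a_{il}) twice, and ŷ is the product
of the 2nl×2nl Hankel matrix generated by g with the block vector x̂.  Then for
1 ≤ s ≤ l, ŷ_s = Σ_{j=1}^n Σ_{k=1}^l a_{j,((s+k−2) mod l)+1} x_{jk}; in particular
ŷ_1 = Σ_j Σ_k a_{jk} x_{jk}. -/
theorem decomposition_yhat_formula
    (R : Type*) [CommRing R] (n l : ℕ) (hn : 1 ≤ n) (hl : 1 ≤ l)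
    (a : ℕ → ℕ → R) (x : ℕ → ℕ → R) (g : ℕ → R)
    (hg1 : ∀ m, 1 ≤ m → m ≤ 2 * l * (2 * n - 1) →
      g m = a ((m + 2 * l - 1) / (2 * l)) ((m - 1) % l + 1))
    (hg0 : ∀ m, m = 0 ∨ 2 * l * (2 * n - 1) < m → g m = 0)
    (yhat : ℕ → R)
    (hyhat : ∀ s, yhat s = ∑ j ∈ Finset.Icc 1 n, ∑ k ∈ Finset.Icc 1 l,
      g (s + 2 * l * (j - 1) + k - 1) * x j k) :
    (∀ s, 1 ≤ s → s ≤ l →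
      yhat s = ∑ j ∈ Finset.Icc 1 n, ∑ k ∈ Finset.Icc 1 l,
        a j ((s + k - 2) % l + 1) * x j k) ∧
    yhat 1 = ∑ j ∈ Finset.Icc 1 n, ∑ k ∈ Finset.Icc 1 l, a j k * x j k := by
  have main : ∀ s, 1 ≤ s → s ≤ l →
      yhat s = ∑ j ∈ Finset.Icc 1 n, ∑ k ∈ Finset.Icc 1 l,
        a j ((s + k - 2) % l + 1) * x j k := by
    intro s hs1 hs2
    rw [hyhat]
    refine Finset.sum_congr rfl fun j hj => Finset.sum_congr rfl fun k hk => ?_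
    simp only [Finset.mem_Icc] at hj hk
    rw [decomp_key R n l hl a g hg1 s j k hs1 hs2 hj.1 hj.2 hk.1 hk.2]
  refine ⟨main, ?_⟩
  rw [main 1 le_rfl hl]
  refine Finset.sum_congr rfl fun j hj => Finset.sum_congr rfl fun k hk => ?_
  simp only [Finset.mem_Icc] at hk
  obtain ⟨hk1, hk2⟩ := hk
  have h1 : (1 + k - 2) % l + 1 = k := by
    have h2 : 1 + k - 2 = k - 1 := by omega
    rw [h2, Nat.mod_eq_of_lt (by omega)]
    omega
  rw [h1]
end

section
/- With the decomposition setup below, the sum of the first l components of ŷ recovers the first component of y: ŷ_1 + ŷ_2 + ⋯ + ŷ_l = Σ_{j=1}^{n} (Σ_{k=1}^{l} a_{jk}) (Σ_{k=1}^{l} x_{jk}) = Σ_{j=1}^n a_j x_j = y_1. -/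
/-!
Summing `ŷ_1, …, ŷ_l` gathers, for each term `x_{jk}`, the entries `g_m` over a window of
`l` consecutive positions inside the `j`-th block of length `2l`. On that block `g` is
`l`-periodic with one period equal to `(a_{j1}, …, a_{jl})` (this is why each block is doubled),
so every such window sums to `a_j`, and the total is `Σ_j a_j x_j = y_1`.
-/

open Finset

theorem sum_range_comp_add_mod {M : Type*} [AddCommMonoid M] (f : ℕ → M) (l c : ℕ) :
    ∑ t ∈ range l, f ((t + c) % l) = ∑ r ∈ range l, f r := by
  rw [range_eq_Ico, sum_Ico_add' (fun m => f (m % l)), zero_add, add_comm l c,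
    ← sum_image (Nat.mod_injOn_Ico c l), Nat.image_Ico_mod, range_eq_Ico]

theorem sum_range_comp_succ {M : Type*} [AddCommMonoid M] (f : ℕ → M) (l : ℕ) :
    ∑ r ∈ range l, f (r + 1) = ∑ k ∈ Icc 1 l, f k := by
  rw [range_eq_Ico, sum_Ico_add', zero_add, Ico_add_one_right_eq_Icc]

theorem doubled_block_entry {M : Type*} {n l j p : ℕ} {a : ℕ → ℕ → M} {g : ℕ → M}
    (hg : ∀ m, 1 ≤ m → m ≤ 2 * l * (2 * n - 1) →
      g m = a ((m + 2 * l - 1) / (2 * l)) ((m - 1) % l + 1))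
    (hj : j ∈ Icc 1 (2 * n - 1)) (hp : p < 2 * l) :
    g (2 * l * (j - 1) + p + 1) = a j (p % l + 1) := by
  obtain ⟨hj₁, hj₂⟩ := mem_Icc.mp hj
  obtain ⟨i, rfl⟩ : ∃ i, j = i + 1 := ⟨j - 1, by omega⟩
  have hblock : 2 * l * i + 2 * l ≤ 2 * l * (2 * n - 1) := by
    simpa only [mul_add, mul_one] using Nat.mul_le_mul_left (2 * l) hj₂
  rw [add_tsub_cancel_right, hg _ (by omega) (by omega)]
  congr 1
  · rw [show 2 * l * i + p + 1 + 2 * l - 1 = p + 2 * l * (i + 1) by rw [mul_add]; omega,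
      Nat.add_mul_div_left _ _ (by omega), Nat.div_eq_of_lt hp, zero_add]
  · rw [add_tsub_cancel_right, show 2 * l * i + p = p + l * (2 * i) by ring,
      Nat.add_mul_mod_self_left]

theorem sum_window_doubled_block {M : Type*} [AddCommMonoid M] {n l j k : ℕ}
    {a : ℕ → ℕ → M} {g : ℕ → M}
    (hg : ∀ m, 1 ≤ m → m ≤ 2 * l * (2 * n - 1) →
      g m = a ((m + 2 * l - 1) / (2 * l)) ((m - 1) % l + 1))
    (hj : j ∈ Icc 1 (2 * n - 1)) (hk : k ∈ Icc 1 l) :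
    ∑ s ∈ Icc 1 l, g (s + 2 * l * (j - 1) + k - 1) = ∑ k' ∈ Icc 1 l, a j k' := by
  have hk' := mem_Icc.mp hk
  calc ∑ s ∈ Icc 1 l, g (s + 2 * l * (j - 1) + k - 1)
      = ∑ t ∈ range l, g (2 * l * (j - 1) + (t + (k - 1)) + 1) := by
        rw [← sum_range_comp_succ]
        refine sum_congr rfl fun t _ => congrArg g ?_
        omega
    _ = ∑ t ∈ range l, a j ((t + (k - 1)) % l + 1) :=
        sum_congr rfl fun t ht => doubled_block_entry hg hj (by simp at ht; omega)
    _ = ∑ k' ∈ Icc 1 l, a j k' := by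
        rw [sum_range_comp_add_mod (fun r => a j (r + 1)), sum_range_comp_succ]

theorem decomposition_first_component_general
    (R : Type*) [CommRing R] (n l : ℕ) (hn : 1 ≤ n)
    (a : ℕ → ℕ → R) (x : ℕ → ℕ → R) (aa xx y : ℕ → R)
    (haa : ∀ i, aa i = ∑ k ∈ Finset.Icc 1 l, a i k)
    (hxx : ∀ j, xx j = ∑ k ∈ Finset.Icc 1 l, x j k)
    (hy : ∀ i, 1 ≤ i → i ≤ n →
      y i = ∑ j ∈ Finset.Icc 1 n, aa (i + j - 1) * xx j)
    (g : ℕ → R)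
    (hg1 : ∀ m, 1 ≤ m → m ≤ 2 * l * (2 * n - 1) →
      g m = a ((m + 2 * l - 1) / (2 * l)) ((m - 1) % l + 1))
    (yhat : ℕ → R)
    (hyhat : ∀ s, yhat s = ∑ j ∈ Finset.Icc 1 n, ∑ k ∈ Finset.Icc 1 l,
      g (s + 2 * l * (j - 1) + k - 1) * x j k) :
    ∑ s ∈ Finset.Icc 1 l, yhat s
        = ∑ j ∈ Finset.Icc 1 n,
            (∑ k ∈ Finset.Icc 1 l, a j k) * (∑ k ∈ Finset.Icc 1 l, x j k) ∧
    ∑ s ∈ Finset.Icc 1 l, yhat s = ∑ j ∈ Finset.Icc 1 n, aa j * xx j ∧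
    ∑ s ∈ Finset.Icc 1 l, yhat s = y 1 := by
  have hsum : ∑ s ∈ Icc 1 l, yhat s
      = ∑ j ∈ Icc 1 n, (∑ k ∈ Icc 1 l, a j k) * (∑ k ∈ Icc 1 l, x j k) := by
    simp only [hyhat, mul_sum]
    rw [sum_comm]
    refine sum_congr rfl fun j hj => ?_
    rw [sum_comm]
    refine sum_congr rfl fun k hk => ?_
    have hj' : j ∈ Icc 1 (2 * n - 1) := by simp only [mem_Icc] at hj ⊢; omega
    rw [← sum_mul, sum_window_doubled_block hg1 hj' hk]
  refine ⟨hsum, ?_, ?_⟩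
  · simp only [hsum, haa, hxx]
  · simp only [hsum, hy 1 le_rfl hn, haa, hxx, Nat.add_sub_cancel_left]

/-- Decomposition setup: with a_i = Σ_k a_{ik}, x_j = Σ_k x_{jk}, y the Hankel
product of (a_1,…,a_{2n−1}) with (x_1,…,x_n), g the doubled-block vector of the
terms a_{ik}, and ŷ the enlarged Hankel product, the sum of the first l components
of ŷ recovers y_1:
ŷ_1 + ⋯ + ŷ_l = Σ_{j=1}^n (Σ_k a_{jk})(Σ_k x_{jk}) = Σ_j a_j x_j = y_1. -/
theorem decomposition_first_component
    (R : Type*) [CommRing R] (n l : ℕ) (hn : 1 ≤ n) (hl : 1 ≤ l)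
    (a : ℕ → ℕ → R) (x : ℕ → ℕ → R) (aa xx y : ℕ → R)
    (haa : ∀ i, aa i = ∑ k ∈ Finset.Icc 1 l, a i k)
    (hxx : ∀ j, xx j = ∑ k ∈ Finset.Icc 1 l, x j k)
    (hy : ∀ i, 1 ≤ i → i ≤ n →
      y i = ∑ j ∈ Finset.Icc 1 n, aa (i + j - 1) * xx j)
    (g : ℕ → R)
    (hg1 : ∀ m, 1 ≤ m → m ≤ 2 * l * (2 * n - 1) →
      g m = a ((m + 2 * l - 1) / (2 * l)) ((m - 1) % l + 1))
    (hg0 : ∀ m, m = 0 ∨ 2 * l * (2 * n - 1) < m → g m = 0)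
    (yhat : ℕ → R)
    (hyhat : ∀ s, yhat s = ∑ j ∈ Finset.Icc 1 n, ∑ k ∈ Finset.Icc 1 l,
      g (s + 2 * l * (j - 1) + k - 1) * x j k) :
    ∑ s ∈ Finset.Icc 1 l, yhat s
        = ∑ j ∈ Finset.Icc 1 n,
            (∑ k ∈ Finset.Icc 1 l, a j k) * (∑ k ∈ Finset.Icc 1 l, x j k) ∧
    ∑ s ∈ Finset.Icc 1 l, yhat s = ∑ j ∈ Finset.Icc 1 n, aa j * xx j ∧
    ∑ s ∈ Finset.Icc 1 l, yhat s = y 1 :=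
  decomposition_first_component_general R n l hn a x aa xx y haa hxx hy g hg1 yhat hyhat
end

section
/- With the decomposition setup below, every component of y is recovered from partial sums of l consecutive components of ŷ aligned with the block pattern of x̂: for every i = 1,…,n, y_i = Σ_{s=1}^{l} ŷ_{2l(i−1)+s}. Thus the Hankel matrix–vector product y = A_H x in which every entry of A_H and of x is a sum of l terms is obtained from a single Hankel product of size 2nl built from the individual terms. -/
private lemma rot_sum {R : Type*} [AddCommMonoid R] (l k : ℕ) (hk1 : 1 ≤ k) (hk2 : k ≤ l)
    (F : ℕ → R) :
    ∑ s ∈ Finset.Icc 1 l, F ((s + k - 2) % l + 1) = ∑ s ∈ Finset.Icc 1 l, F s := by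
  have hl0 : 0 < l := le_trans hk1 hk2
  refine Finset.sum_nbij' (i := fun s => (s + k - 2) % l + 1)
    (j := fun t => (t + l - k) % l + 1) ?_ ?_ ?_ ?_ ?_
  · intro s hs
    simp only [Finset.mem_Icc] at *
    exact ⟨Nat.le_add_left _ _, Nat.succ_le_of_lt (Nat.mod_lt _ hl0)⟩
  · intro t ht
    simp only [Finset.mem_Icc] at *
    exact ⟨Nat.le_add_left _ _, Nat.succ_le_of_lt (Nat.mod_lt _ hl0)⟩
  · intro s hs
    simp only [Finset.mem_Icc] at hs
    show ((s + k - 2) % l + 1 + l - k) % l + 1 = s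
    have h1 : (s + k - 2) % l + 1 + l - k = (s + k - 2) % l + (1 + l - k) := by omega
    rw [h1, Nat.mod_add_mod]
    have h2 : s + k - 2 + (1 + l - k) = (s - 1) + l := by omega
    rw [h2, Nat.add_mod_right, Nat.mod_eq_of_lt (by omega)]
    omega
  · intro t ht
    simp only [Finset.mem_Icc] at ht
    show ((t + l - k) % l + 1 + k - 2) % l + 1 = t
    have h1 : (t + l - k) % l + 1 + k - 2 = (t + l - k) % l + (k - 1) := by omega
    rw [h1, Nat.mod_add_mod]
    have h2 : t + l - k + (k - 1) = (t - 1) + l := by omega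
    rw [h2, Nat.add_mod_right, Nat.mod_eq_of_lt (by omega)]
    omega
  · intro s hs; rfl

/-- Decomposition setup: with a_i = Σ_k a_{ik}, x_j = Σ_k x_{jk}, y the Hankel
product of (a_1,…,a_{2n−1}) with (x_1,…,x_n), g the doubled-block vector of the
terms a_{ik}, and ŷ the enlarged 2nl-size Hankel product, every component of y is
recovered from partial sums of l consecutive components of ŷ:
y_i = Σ_{s=1}^l ŷ_{2l(i−1)+s} for i = 1,…,n. -/
theorem decomposition_recovers_product
    (R : Type*) [CommRing R] (n l : ℕ) (hn : 1 ≤ n) (hl : 1 ≤ l)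
    (a : ℕ → ℕ → R) (x : ℕ → ℕ → R) (aa xx y : ℕ → R)
    (haa : ∀ i, aa i = ∑ k ∈ Finset.Icc 1 l, a i k)
    (hxx : ∀ j, xx j = ∑ k ∈ Finset.Icc 1 l, x j k)
    (hy : ∀ i, 1 ≤ i → i ≤ n →
      y i = ∑ j ∈ Finset.Icc 1 n, aa (i + j - 1) * xx j)
    (g : ℕ → R)
    (hg1 : ∀ m, 1 ≤ m → m ≤ 2 * l * (2 * n - 1) →
      g m = a ((m + 2 * l - 1) / (2 * l)) ((m - 1) % l + 1))
    (hg0 : ∀ m, m = 0 ∨ 2 * l * (2 * n - 1) < m → g m = 0)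
    (yhat : ℕ → R)
    (hyhat : ∀ s, yhat s = ∑ j ∈ Finset.Icc 1 n, ∑ k ∈ Finset.Icc 1 l,
      g (s + 2 * l * (j - 1) + k - 1) * x j k) :
    ∀ i, 1 ≤ i → i ≤ n →
      y i = ∑ s ∈ Finset.Icc 1 l, yhat (2 * l * (i - 1) + s) := by
  intro i hi1 hi2
  rw [hy i hi1 hi2]
  simp only [hyhat]
  rw [Finset.sum_comm]
  refine Finset.sum_congr rfl ?_
  intro j hj
  simp only [Finset.mem_Icc] at hj
  rw [haa, hxx, Finset.sum_comm, Finset.mul_sum]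
  refine Finset.sum_congr rfl ?_
  intro k hk
  simp only [Finset.mem_Icc] at hk
  rw [← Finset.sum_mul]
  congr 1
  have key : ∀ s ∈ Finset.Icc 1 l,
      g (2 * l * (i - 1) + s + 2 * l * (j - 1) + k - 1)
        = a (i + j - 1) ((s + k - 2) % l + 1) := by
    intro s hs
    simp only [Finset.mem_Icc] at hs
    set m := 2 * l * (i - 1) + s + 2 * l * (j - 1) + k - 1 with hm
    have e1 : 2 * l * (i + j - 2) = 2 * l * (i - 1) + 2 * l * (j - 1) := by
      rw [← Nat.mul_add]; congr 1; omega
    have e2 : 2 * l * (2 * n - 1) = 2 * l * (2 * n - 2) + 2 * l := by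
      rw [show 2 * n - 1 = (2 * n - 2) + 1 from by omega, Nat.mul_succ]
    have e3 : 2 * l * (i + j - 1) = 2 * l * (i + j - 2) + 2 * l := by
      rw [show i + j - 1 = (i + j - 2) + 1 from by omega, Nat.mul_succ]
    have e4 : l * (2 * (i + j - 2)) = 2 * l * (i + j - 2) := by ring
    have hCle : 2 * l * (i + j - 2) ≤ 2 * l * (2 * n - 2) :=
      Nat.mul_le_mul_left _ (by omega)
    have hm1 : m = 2 * l * (i + j - 2) + (s + k - 1) := by omega
    have hb1 : 1 ≤ m := by omega
    have hb2 : m ≤ 2 * l * (2 * n - 1) := by omega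
    rw [hg1 m hb1 hb2]
    congr 1
    · -- (m + 2l - 1) / (2l) = i + j - 1
      have h3 : m + 2 * l - 1 = 2 * l * (i + j - 1) + (s + k - 2) := by omega
      rw [h3, Nat.mul_add_div (by omega), Nat.div_eq_of_lt (by omega), Nat.add_zero]
    · -- (m - 1) % l = (s + k - 2) % l
      have h4 : m - 1 = l * (2 * (i + j - 2)) + (s + k - 2) := by omega
      rw [h4, Nat.mul_add_mod]
  rw [Finset.sum_congr rfl key]
  exact (rot_sum l k hk.1 hk.2 (a (i + j - 1))).symm
end

section
/- With the half-size splitting setup below, for every i = 1, …, m, the odd-numbered components of the Hankel product satisfy y_{2i−1} = p_i − q_i. -/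
lemma pair_sum_aux {R : Type*} [AddCommMonoid R] (F : ℤ → R) :
    ∀ m : ℕ, ∑ j ∈ Finset.Icc (1:ℤ) (2*(m:ℤ)), F j
      = ∑ j ∈ Finset.Icc (1:ℤ) (m:ℤ), (F (2*j-1) + F (2*j)) := by
  intro m
  induction m with
  | zero => simp
  | succ k ih =>
      have h1 : Finset.Icc (1:ℤ) (2*((k:ℤ)+1)) =
          insert (2*(k:ℤ)+2) (insert (2*(k:ℤ)+1) (Finset.Icc (1:ℤ) (2*(k:ℤ)))) := by
        ext j; simp only [Finset.mem_Icc, Finset.mem_insert]; omega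
      have h2 : Finset.Icc (1:ℤ) ((k:ℤ)+1) = insert ((k:ℤ)+1) (Finset.Icc (1:ℤ) (k:ℤ)) := by
        ext j; simp only [Finset.mem_Icc, Finset.mem_insert]; omega
      push_cast
      rw [h1, h2,
        Finset.sum_insert (by intro hmem; simp only [Finset.mem_Icc, Finset.mem_insert] at hmem; omega),
        Finset.sum_insert (by intro hmem; simp only [Finset.mem_Icc] at hmem; omega),
        Finset.sum_insert (by intro hmem; simp only [Finset.mem_Icc] at hmem; omega), ih]
      ring_nf
      rw [add_left_comm, add_assoc]

/-- Half-size splitting of the Hankel product: with c_i = a_{2i−1}+a_{2i},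
d_i = a_{2i}, h_j = x_{2j−1}, f_j = x_{2j−1}−x_{2j}, and the half-size Hankel
products p, q of size m = ⌊(n+1)/2⌋, the odd-numbered components satisfy
y_{2i−1} = p_i − q_i for i = 1,…,m. -/
theorem half_size_split_odd
    (R : Type*) [CommRing R] (n : ℕ) (hn : 2 ≤ n)
    (a x : ℤ → R)
    (ha0 : ∀ j : ℤ, j < 1 ∨ (2 * (n : ℤ) - 1) < j → a j = 0)
    (hx0 : ∀ j : ℤ, j < 1 ∨ (n : ℤ) < j → x j = 0)
    (y : ℤ → R)
    (hy : ∀ i : ℤ, 1 ≤ i → i ≤ (n : ℤ) →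
      y i = ∑ j ∈ Finset.Icc (1 : ℤ) (n : ℤ), a (i + j - 1) * x j)
    (m m₁ : ℕ) (hm : m = (n + 1) / 2) (hm₁ : m₁ = (n + 2) / 2)
    (c d e h f g : ℤ → R)
    (hc : ∀ i : ℤ, c i = a (2 * i - 1) + a (2 * i))
    (hd : ∀ i : ℤ, d i = a (2 * i))
    (he : ∀ i : ℤ, e i = a (2 * i - 1))
    (hh : ∀ j : ℤ, h j = x (2 * j - 1))
    (hf : ∀ j : ℤ, f j = x (2 * j - 1) - x (2 * j))
    (hg : ∀ j : ℤ, g j = x (2 * j - 2) - x (2 * j - 1))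
    (p q r : ℤ → R)
    (hp : ∀ i : ℤ, p i = ∑ j ∈ Finset.Icc (1 : ℤ) (m : ℤ), c (i + j - 1) * h j)
    (hq : ∀ i : ℤ, q i = ∑ j ∈ Finset.Icc (1 : ℤ) (m : ℤ), d (i + j - 1) * f j)
    (hr : ∀ i : ℤ, r i = ∑ j ∈ Finset.Icc (1 : ℤ) (m₁ : ℤ), e (i + j - 1) * g j) :
    ∀ i : ℤ, 1 ≤ i → i ≤ (m : ℤ) → y (2 * i - 1) = p i - q i := by
  intro i hi1 him
  have hmn : (n : ℤ) ≤ 2 * (m : ℤ) ∧ 2 * (m : ℤ) ≤ (n : ℤ) + 1 := by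
    constructor <;> · have : m = (n+1)/2 := hm; omega
  have h1 : (1 : ℤ) ≤ 2 * i - 1 := by omega
  have h2 : 2 * i - 1 ≤ (n : ℤ) := by omega
  rw [hy _ h1 h2, hp, hq]
  -- extend the sum from Icc 1 n to Icc 1 (2m)
  have hsub : Finset.Icc (1:ℤ) (n:ℤ) ⊆ Finset.Icc (1:ℤ) (2*(m:ℤ)) := by
    intro j hj; simp only [Finset.mem_Icc] at *; omega
  have hext : ∑ j ∈ Finset.Icc (1:ℤ) (n:ℤ), a (2*i - 1 + j - 1) * x j
      = ∑ j ∈ Finset.Icc (1:ℤ) (2*(m:ℤ)), a (2*i - 1 + j - 1) * x j := by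
    apply Finset.sum_subset hsub
    intro j hj hj'
    simp only [Finset.mem_Icc] at hj hj'
    rw [hx0 j (Or.inr (by omega)), mul_zero]
  rw [hext, pair_sum_aux (fun j => a (2*i - 1 + j - 1) * x j) m]
  rw [← Finset.sum_sub_distrib]
  apply Finset.sum_congr rfl
  intro j hj
  beta_reduce
  rw [hc, hd, hh, hf]
  have e1 : 2*i - 1 + (2*j - 1) - 1 = 2*(i + j - 1) - 1 := by ring
  have e2 : 2*i - 1 + 2*j - 1 = 2*(i + j - 1) := by ring
  rw [e1, e2]
  ring
end

section
/- With the half-size splitting setup below, for every i with 1 ≤ i ≤ m and 2i ≤ n, the even-numbered components of the Hankel product satisfy y_{2i} = p_i + r_i. -/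
/-!
Split `y (2 * i)` into the terms with odd and with even index of `x`. Since `x` vanishes
beyond `n`, all sums may be taken over `j ≤ m₁`. Expanding `p i + r i` term by term, the terms
`a (2i+2j-2) * x (2j-1)` match those of `y (2 * i)`, and the remaining terms
`a (2i+2j-3) * x (2j-2)` are the even ones of `y (2 * i)` shifted by one index: their difference
telescopes to boundary terms containing `x 0` and `x (2 * m₁)`, both zero.
-/

open Finset

section IntervalSums

variable {M : Type*}

theorem sum_Icc_int_succ_top [AddCommMonoid M] (f : ℤ → M) {a b : ℤ} (hab : a ≤ b + 1) :
    ∑ k ∈ Icc a (b + 1), f k = ∑ k ∈ Icc a b, f k + f (b + 1) := by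
  rw [← insert_Icc_right_eq_Icc_add_one hab, sum_insert (by simp), add_comm]

theorem sum_Icc_eq_sum_Icc_of_eq_zero [AddCommMonoid M] {α : Type*} [LinearOrder α]
    [LocallyFiniteOrder α] {f : α → M} {a b b' : α} (hb : b ≤ b')
    (hf : ∀ k, b < k → k ≤ b' → f k = 0) :
    ∑ k ∈ Icc a b, f k = ∑ k ∈ Icc a b', f k :=
  sum_subset (Icc_subset_Icc le_rfl hb) fun k hk hk' => by
    simp only [mem_Icc, not_and, not_le] at hk hk'
    exact hf k (hk' hk.1) hk.2

theorem sum_Icc_two_mul_eq_sum_pairs [AddCommMonoid M] (f : ℤ → M) (N : ℕ) :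
    ∑ k ∈ Icc 1 (2 * (N : ℤ)), f k = ∑ j ∈ Icc 1 (N : ℤ), (f (2 * j - 1) + f (2 * j)) := by
  induction N with
  | zero => simp
  | succ N ih =>
    have htop : 2 * ((N + 1 : ℕ) : ℤ) = 2 * N + 1 + 1 := by push_cast; ring
    rw [htop, sum_Icc_int_succ_top _ (by omega), sum_Icc_int_succ_top _ (by omega), ih,
      Nat.cast_succ, sum_Icc_int_succ_top _ (by omega), add_assoc]
    congr 3; ring

theorem sum_Icc_sub_telescope [AddCommGroup M] (g : ℤ → M) (N : ℕ) :
    ∑ j ∈ Icc 1 (N : ℤ), (g (j - 1) - g j) = g 0 - g N := by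
  induction N with
  | zero => simp
  | succ N ih =>
    rw [Nat.cast_succ, sum_Icc_int_succ_top _ (by omega), ih, add_sub_cancel_right]
    abel

end IntervalSums

theorem half_size_split_even_general
    (R : Type*) [CommRing R] (n : ℕ)
    (a x : ℤ → R)
    (hx0 : ∀ j : ℤ, j < 1 ∨ (n : ℤ) < j → x j = 0)
    (y : ℤ → R)
    (hy : ∀ i : ℤ, 1 ≤ i → i ≤ (n : ℤ) →
      y i = ∑ j ∈ Finset.Icc (1 : ℤ) (n : ℤ), a (i + j - 1) * x j)
    (m m₁ : ℕ) (hm : m = (n + 1) / 2) (hm₁ : m₁ = (n + 2) / 2)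
    (c e h g : ℤ → R)
    (hc : ∀ i : ℤ, c i = a (2 * i - 1) + a (2 * i))
    (he : ∀ i : ℤ, e i = a (2 * i - 1))
    (hh : ∀ j : ℤ, h j = x (2 * j - 1))
    (hg : ∀ j : ℤ, g j = x (2 * j - 2) - x (2 * j - 1))
    (p r : ℤ → R)
    (hp : ∀ i : ℤ, p i = ∑ j ∈ Finset.Icc (1 : ℤ) (m : ℤ), c (i + j - 1) * h j)
    (hr : ∀ i : ℤ, r i = ∑ j ∈ Finset.Icc (1 : ℤ) (m₁ : ℤ), e (i + j - 1) * g j) :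
    ∀ i : ℤ, 1 ≤ i → i ≤ (m : ℤ) → 2 * i ≤ (n : ℤ) → y (2 * i) = p i + r i := by
  intro i hi _ h2i
  have hx_top : ∀ k : ℤ, (n : ℤ) < k → x k = 0 := fun k hk => hx0 k (Or.inr hk)
  have hy_pairs : y (2 * i) = ∑ j ∈ Icc 1 (m₁ : ℤ),
      (a (2 * i + 2 * j - 2) * x (2 * j - 1) + a (2 * i + 2 * j - 1) * x (2 * j)) := by
    rw [hy _ (by omega) h2i, sum_Icc_eq_sum_Icc_of_eq_zero (b' := 2 * (m₁ : ℤ)) (by omega)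
      fun k hk _ => by rw [hx_top k hk, mul_zero], sum_Icc_two_mul_eq_sum_pairs]
    refine sum_congr rfl fun j _ => ?_
    ring_nf
  have hpr_pairs : p i + r i = ∑ j ∈ Icc 1 (m₁ : ℤ),
      (a (2 * i + 2 * j - 2) * x (2 * j - 1) + a (2 * i + 2 * j - 3) * x (2 * j - 2)) := by
    rw [hp, sum_Icc_eq_sum_Icc_of_eq_zero (b' := (m₁ : ℤ)) (by omega)
      fun k hk _ => by rw [hh, hx_top _ (by omega), mul_zero], hr, ← sum_add_distrib]
    refine sum_congr rfl fun j _ => ?_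
    rw [hc, he, hh, hg]
    ring_nf
  have htelescope := sum_Icc_sub_telescope (fun j => a (2 * i + 2 * j - 1) * x (2 * j)) m₁
  rw [hx0 _ (Or.inl (by omega)), hx_top _ (by omega), mul_zero, mul_zero, sub_self] at htelescope
  rw [eq_comm, ← sub_eq_zero, hpr_pairs, hy_pairs, ← sum_sub_distrib, ← htelescope]
  refine sum_congr rfl fun j _ => ?_
  ring_nf

/-- Half-size splitting of the Hankel product: with c_i = a_{2i−1}+a_{2i},
d_i = a_{2i}, h_j = x_{2j−1}, f_j = x_{2j−1}−x_{2j}, and the half-size Hankel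
products p (size m = ⌊(n+1)/2⌋) and r (size m₁ = ⌈(n+1)/2⌉, with e_i = a_{2i−1}, g_j = x_{2j−2}−x_{2j−1}), the even-numbered components satisfy
y_{2i} = p_i + r_i for i with 1 ≤ i ≤ m and 2i ≤ n. -/
theorem half_size_split_even
    (R : Type*) [CommRing R] (n : ℕ) (hn : 2 ≤ n)
    (a x : ℤ → R)
    (ha0 : ∀ j : ℤ, j < 1 ∨ (2 * (n : ℤ) - 1) < j → a j = 0)
    (hx0 : ∀ j : ℤ, j < 1 ∨ (n : ℤ) < j → x j = 0)
    (y : ℤ → R)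
    (hy : ∀ i : ℤ, 1 ≤ i → i ≤ (n : ℤ) →
      y i = ∑ j ∈ Finset.Icc (1 : ℤ) (n : ℤ), a (i + j - 1) * x j)
    (m m₁ : ℕ) (hm : m = (n + 1) / 2) (hm₁ : m₁ = (n + 2) / 2)
    (c d e h f g : ℤ → R)
    (hc : ∀ i : ℤ, c i = a (2 * i - 1) + a (2 * i))
    (hd : ∀ i : ℤ, d i = a (2 * i))
    (he : ∀ i : ℤ, e i = a (2 * i - 1))
    (hh : ∀ j : ℤ, h j = x (2 * j - 1))
    (hf : ∀ j : ℤ, f j = x (2 * j - 1) - x (2 * j))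
    (hg : ∀ j : ℤ, g j = x (2 * j - 2) - x (2 * j - 1))
    (p q r : ℤ → R)
    (hp : ∀ i : ℤ, p i = ∑ j ∈ Finset.Icc (1 : ℤ) (m : ℤ), c (i + j - 1) * h j)
    (hq : ∀ i : ℤ, q i = ∑ j ∈ Finset.Icc (1 : ℤ) (m : ℤ), d (i + j - 1) * f j)
    (hr : ∀ i : ℤ, r i = ∑ j ∈ Finset.Icc (1 : ℤ) (m₁ : ℤ), e (i + j - 1) * g j) :
    ∀ i : ℤ, 1 ≤ i → i ≤ (m : ℤ) → 2 * i ≤ (n : ℤ) → y (2 * i) = p i + r i :=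
  half_size_split_even_general R n a x hx0 y hy m m₁ hm hm₁ c e h g hc he hh hg p r hp hr
end
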